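/- Let Σ be an oriented surface of genus m with n punctures, γ a generic immersed closed curve with base point p, and τ ∈ π₁(Σ,p). For all sufficiently small ε > 0, the intersection number of the image of the 2-simplex C^ε under the lifted evaluation map ev_τ with the diagonal Δ ⊂ Σ̃ × Σ̃ equals the coefficient of τ in ⟨γ⟩: I(ev_τ(C^ε), Δ) = ⟨γ⟩^τ. -/

import Mathlib

/-!
Lemma `Lem:Intersec`: I(ev_τ(C^ε), Δ) = ⟨γ⟩^τ, the intersection number of the image of
the 2-simplex C^ε under the lifted evaluation map with the diagonal of the universal cover
equals the coefficient of τ in ⟨γ⟩.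

The surface is an arbitrary oriented smooth 2-manifold `M` (oriented by a continuous
nonvanishing area form `ω`, which also provides the signs of crossings).  The group ring
`ℤ[π₁(M,p)]` is realized as `(Path.Homotopic.Quotient p p) →₀ ℤ`.  All genericity data
(double points of `γ`, intersections of `γ_T` with `γ`, tangency points of `γ'` with `X`,
intersections of the semitrajectories of the base point with `γ`) is given by finite
enumerations together with hypotheses stating that they are exactly, and transversally,
what they should be.  The term `2·ind_T(γ,p)` is written as `⟨γ,ΦN⟩ + ⟨ΦP,γ⟩`.
-/

open scoped Manifold unitInterval
noncomputable section

abbrev E2 : Type := EuclideanSpace ℝ (Fin 2)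

variable {M : Type*} [TopologicalSpace M] [ChartedSpace E2 M] [IsManifold (𝓡 2) (⊤ : ℕ∞) M]

/-- The velocity vector of a curve in a surface. -/
def tvec (γ : ℝ → M) (t : ℝ) : E2 :=
  mfderiv 𝓘(ℝ, ℝ) (𝓡 2) γ t ((1 : ℝ) : TangentSpace 𝓘(ℝ, ℝ) t)

/-- Reparametrized restriction of a curve to `[a,b]`, as a `Path`. -/
def seg (γ : ℝ → M) (hγ : Continuous γ) (a b : ℝ) : Path (γ a) (γ b) where
  toFun s := γ (a + (b - a) * s)
  continuous_toFun := by fun_prop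
  source' := by simp
  target' := by simp

/-- The flow arc from `Φ a x` to `Φ b x`, as a `Path`. -/
def flowSeg (Φ : ℝ → M → M) (hΦ : Continuous fun q : ℝ × M => Φ q.1 q.2) (x : M) (a b : ℝ) :
    Path (Φ a x) (Φ b x) where
  toFun s := Φ (a + (b - a) * s) x
  continuous_toFun := by fun_prop
  source' := by simp
  target' := by simp

/-- The sign (`±1`) of a real quantity, used for signs of crossings. -/
def osgn (x : ℝ) : ℤ := if 0 < x then 1 else -1

/-- Homotopy class `τ_d(γ)` of the loop `γ|[0,u]` followed by `γ|[v,1]`, for a double point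
`d = γ(u) = γ(v)`. -/
def dblClass (γ : ℝ → M) (hγ : Continuous γ) (p : M) (h0 : γ 0 = p) (h1 : γ 1 = p)
    (u v : ℝ) (huv : γ u = γ v) : Path.Homotopic.Quotient p p :=
  ⟦((seg γ hγ 0 u).trans ((seg γ hγ v 1).cast huv rfl)).cast h0.symm h1.symm⟧

/-- Homotopy class `[γ]` of the whole based loop `γ`. -/
def loopClass (γ : ℝ → M) (hγ : Continuous γ) (p : M) (h0 : γ 0 = p) (h1 : γ 1 = p) :
    Path.Homotopic.Quotient p p :=
  ⟦(seg γ hγ 0 1).cast h0.symm h1.symm⟧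

/-- Homotopy class `τ_{d,T}(γ)` of the loop `γ|[0,a]`, then the flow arc `Φ_t(γ(a))`,
`t ∈ [0,T]`, then `γ|[b,1]`, for an intersection `d = Φ_T(γ(a)) = γ(b)` of `γ_T` with `γ`. -/
def shiftClass (γ : ℝ → M) (hγ : Continuous γ) (p : M) (h0 : γ 0 = p) (h1 : γ 1 = p)
    (Φ : ℝ → M → M) (hΦ : Continuous fun q : ℝ × M => Φ q.1 q.2) (hΦ0 : ∀ x, Φ 0 x = x)
    (T a b : ℝ) (hab : Φ T (γ a) = γ b) : Path.Homotopic.Quotient p p :=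
  ⟦(((seg γ hγ 0 a).trans ((flowSeg Φ hΦ (γ a) 0 T).cast (hΦ0 (γ a)).symm rfl)).trans
      ((seg γ hγ b 1).cast hab rfl)).cast h0.symm h1.symm⟧

/-- Homotopy class `τ_d(γ, ΦN)` of the loop `γ|[0,s]` followed by the flow arc `Φ_t(p)`,
`t ∈ [r,0]`, for an intersection `d = γ(s) = Φ_r(p)` of `γ` with the negative semitrajectory
of the base point. -/
def minusClass (γ : ℝ → M) (hγ : Continuous γ) (p : M) (h0 : γ 0 = p)
    (Φ : ℝ → M → M) (hΦ : Continuous fun q : ℝ × M => Φ q.1 q.2) (hΦ0 : ∀ x, Φ 0 x = x)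
    (r s : ℝ) (h : Φ r p = γ s) : Path.Homotopic.Quotient p p :=
  ⟦((seg γ hγ 0 s).trans ((flowSeg Φ hΦ p r 0).cast h.symm (hΦ0 p).symm)).cast h0.symm rfl⟧

/-- Homotopy class `τ_d(ΦP, γ)` of the flow arc `Φ_t(p)`, `t ∈ [0,r]`, followed by `γ|[s,1]`,
for an intersection `d = Φ_r(p) = γ(s)` of the positive semitrajectory of the base point
with `γ`. -/
def plusClass (γ : ℝ → M) (hγ : Continuous γ) (p : M) (h1 : γ 1 = p)
    (Φ : ℝ → M → M) (hΦ : Continuous fun q : ℝ × M => Φ q.1 q.2) (hΦ0 : ∀ x, Φ 0 x = x)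
    (r s : ℝ) (h : Φ r p = γ s) : Path.Homotopic.Quotient p p :=
  ⟦(((flowSeg Φ hΦ p 0 r).cast (hΦ0 p).symm rfl).trans ((seg γ hγ s 1).cast h rfl)).cast
      rfl h1.symm⟧

/-- The universal covering space of `M` (with base point `p`): homotopy classes of paths
in `M` starting at `p`, recorded together with their endpoints (the covering projection is
the first component). -/
def Cover (M : Type*) [TopologicalSpace M] (p : M) : Type _ :=
  Σ x : M, Path.Homotopic.Quotient p x

/-- First component `ξ₁` of the lifted evaluation map `ev_τ`: the class of the path
`γ|[0,u]`. -/
def evFst (γ : ℝ → M) (hγ : Continuous γ) (p : M) (h0 : γ 0 = p) (u : ℝ) : Cover M p :=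
  ⟨γ u, ⟦(seg γ hγ 0 u).cast h0.symm rfl⟧⟩

/-- Second component `ξ₂` of the lifted evaluation map `ev_τ`: the class of the loop `τ`
followed by the path `γ(1−t)`, `t ∈ [0,1−v]` (i.e. `γ` traversed backwards from `1`
to `v`). -/
def evSnd (γ : ℝ → M) (hγ : Continuous γ) (p : M) (h1 : γ 1 = p)
    (τ : Path.Homotopic.Quotient p p) (v : ℝ) : Cover M p :=
  ⟨γ v, Path.Homotopic.Quotient.trans τ ⟦(seg γ hγ 1 v).cast h1.symm rfl⟧⟩

/-- The lift `Φ̃_T` of the time-`T` flow map to the universal cover: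
`(x, ξ) ↦ (Φ_T(x), ξ` followed by the flow arc `Φ_t(x)`, `t ∈ [0,T])`. -/
def coverFlow (Φ : ℝ → M → M) (hΦ : Continuous fun q : ℝ × M => Φ q.1 q.2)
    (hΦ0 : ∀ x, Φ 0 x = x) (T : ℝ) (p : M) : Cover M p → Cover M p :=
  fun z => ⟨Φ T z.1, Path.Homotopic.Quotient.trans z.2 ⟦(flowSeg Φ hΦ z.1 0 T).cast (hΦ0 z.1).symm rfl⟧⟩

/-!
Projecting to `Σ`, a point `(s,t)` with `ξ₁(s) = ξ₂(t)` has `γ(s) = γ(t)`, so it is a double point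
`(uᵢ, vᵢ)`; conversely every double point lies in `C^ε` once `ε` is smaller than its distance to
the boundary of the simplex. At a double point, `ξ₁ = ξ₂` says that `γ|[0,u]` is homotopic to `τ`
followed by `γ` run backwards from `1` to `v`, i.e. that `τ_d(γ) = τ`. Hence the signed count of
the intersections is the sum of the signs of the double points `d` with `τ_d(γ) = τ`.
-/

namespace Path.Homotopic.Quotient

variable {X : Type*} [TopologicalSpace X]

theorem eq_trans_symm_iff {x y z : X} (a : Path.Homotopic.Quotient x y)
    (b : Path.Homotopic.Quotient y z) (t : Path.Homotopic.Quotient x z) :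
    a = t.trans b.symm ↔ a.trans b = t := by
  constructor <;> rintro rfl <;> simp

theorem trans_cast {x y z z' : X} (a : Path.Homotopic.Quotient x y)
    (b : Path.Homotopic.Quotient y z) (h : z' = z) :
    (a.trans b).cast rfl h = a.trans (b.cast rfl h) := by
  subst h; simp

end Path.Homotopic.Quotient

theorem Cover.mk_eq_mk_iff {X : Type*} [TopologicalSpace X] {p x y : X} (h : x = y)
    (a : Path.Homotopic.Quotient p x) (b : Path.Homotopic.Quotient p y) :
    (⟨x, a⟩ : Cover X p) = ⟨y, b⟩ ↔ a = b.cast rfl h := by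
  subst h
  simp

/-- The simplex `C^ε`. -/
def truncSimplex (ε : ℝ) : Set (ℝ × ℝ) := {q | ε ≤ q.1 ∧ q.1 + ε ≤ q.2 ∧ q.2 ≤ 1 - ε}

open Filter Topology in
theorem eventually_mem_truncSimplex {s t : ℝ} (h : 0 < s ∧ s < t ∧ t < 1) :
    ∀ᶠ ε in 𝓝[>] 0, (s, t) ∈ truncSimplex ε := by
  obtain ⟨hs, hst, ht⟩ := h
  filter_upwards [nhdsWithin_le_nhds (eventually_lt_nhds (lt_min hs (lt_min (sub_pos.2 hst)
    (sub_pos.2 ht))))] with ε hε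
  simp only [lt_min_iff] at hε
  exact ⟨hε.1.le, by linarith, by linarith⟩

theorem Finsupp.sum_smul_single_one_apply {ι α R : Type*} [Fintype ι] [DecidableEq α]
    [Semiring R] (c : ι → R) (d : ι → α) (a : α) :
    (∑ i, c i • Finsupp.single (d i) (1 : R)) a = ∑ i with d i = a, c i := by
  simp [Finsupp.finsetSum_apply, Finsupp.single_apply, Finset.sum_filter]

section Curve

variable {X : Type*} [TopologicalSpace X] {γ : ℝ → X} (hγ : Continuous γ)

theorem seg_symm (a b : ℝ) : (seg γ hγ a b).symm = seg γ hγ b a := by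
  ext s
  change γ (a + (b - a) * (σ s : ℝ)) = γ (b + (a - b) * s)
  rw [unitInterval.coe_symm_eq]
  ring_nf

variable {p : X} (h0 : γ 0 = p) (h1 : γ 1 = p)

theorem evFst_eq_evSnd_iff (τ : Path.Homotopic.Quotient p p) {s t : ℝ} (hst : γ s = γ t) :
    evFst γ hγ p h0 s = evSnd γ hγ p h1 τ t ↔ dblClass γ hγ p h0 h1 s t hst = τ := by
  have hdbl : dblClass γ hγ p h0 h1 s t hst = Path.Homotopic.Quotient.trans
      (.mk ((seg γ hγ 0 s).cast h0.symm rfl)) (.mk ((seg γ hγ t 1).cast hst h1.symm)) := rfl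
  have hback : (Path.Homotopic.Quotient.mk ((seg γ hγ 1 t).cast h1.symm rfl)).cast rfl hst =
      (Path.Homotopic.Quotient.mk ((seg γ hγ t 1).cast hst h1.symm)).symm := by
    rw [← seg_symm, Path.cast_symm]; rfl
  rw [hdbl, ← Path.Homotopic.Quotient.eq_trans_symm_iff, ← hback,
    ← Path.Homotopic.Quotient.trans_cast]
  exact Cover.mk_eq_mk_iff hst _ _

theorem setOf_evFst_eq_evSnd_eq_image {k : ℕ} {u v : Fin k → ℝ} (huv : ∀ i, γ (u i) = γ (v i))
    (huv_all : ∀ s t : ℝ, 0 ≤ s → s < t → t < 1 → γ s = γ t → ∃ i, u i = s ∧ v i = t)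
    {ε : ℝ} (hε : 0 < ε) (hmem : ∀ i, (u i, v i) ∈ truncSimplex ε)
    (τ : Path.Homotopic.Quotient p p) :
    {q | q ∈ truncSimplex ε ∧ evFst γ hγ p h0 q.1 = evSnd γ hγ p h1 τ q.2} =
      (fun i => (u i, v i)) '' {i | dblClass γ hγ p h0 h1 (u i) (v i) (huv i) = τ} := by
  ext ⟨s, t⟩
  constructor
  · rintro ⟨⟨hs, hst, ht⟩, hev⟩
    obtain ⟨i, rfl, rfl⟩ := huv_all s t (by linarith) (by linarith) (by linarith)
      (congrArg Sigma.fst hev)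
    exact ⟨i, (evFst_eq_evSnd_iff hγ h0 h1 τ (huv i)).1 hev, rfl⟩
  · rintro ⟨i, hi, hq⟩
    obtain ⟨rfl, rfl⟩ := Prod.mk.inj hq
    exact ⟨hmem i, (evFst_eq_evSnd_iff hγ h0 h1 τ (huv i)).2 hi⟩

end Curve

/-- As all intersections are transversal, `I(ev_τ(C^ε), Δ)` is the count of the parameters
`(u,v) ∈ C^ε` with `ξ₁(u) = ξ₂(v)`, each signed by the orientation of `(γ'(u), γ'(v))`. -/
theorem intersection_number_with_diagonal_general
    {M : Type*} [TopologicalSpace M] [ChartedSpace E2 M]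
    -- an orientation of the surface, given by a continuous nonvanishing area form
    (ω : M → E2 →L[ℝ] E2 →L[ℝ] ℝ)
    -- the curve: a generic immersion `γ : [0,1] → M` with base point `p = γ(0) = γ(1)`
    (γ : ℝ → M) (p : M)
    (hγ_cont : Continuous γ)
    (h0 : γ 0 = p) (h1 : γ 1 = p)
    -- the double points of `γ`
    (k : ℕ) (u v : Fin k → ℝ)
    (huv : ∀ i, γ (u i) = γ (v i))
    (huv_range : ∀ i, 0 < u i ∧ u i < v i ∧ v i < 1)
    (huv_inj : Function.Injective fun i => (u i, v i))
    (huv_all : ∀ s t : ℝ, 0 ≤ s → s < t → t < 1 → γ s = γ t → ∃ i, u i = s ∧ v i = t)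
    -- a homotopy class `τ ∈ π₁(Σ,p)`
    (τ : Path.Homotopic.Quotient p p) :
    ∃ ε₀ : ℝ, 0 < ε₀ ∧ ∀ ε : ℝ, 0 < ε → ε < ε₀ →
      -- the (finite) set of intersections of `ev_τ(C^ε)` with the diagonal `Δ`
      ∀ hfin : {q : ℝ × ℝ | ε ≤ q.1 ∧ q.1 + ε ≤ q.2 ∧ q.2 ≤ 1 - ε ∧
          evFst γ hγ_cont p h0 q.1 = evSnd γ hγ_cont p h1 τ q.2}.Finite,
      -- I(ev_τ(C^ε), Δ) = ⟨γ⟩^τ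
      (∑ q ∈ hfin.toFinset, osgn (ω (γ q.1) (tvec γ q.1) (tvec γ q.2)))
        =
      (∑ i : Fin k, osgn (ω (γ (u i)) (tvec γ (u i)) (tvec γ (v i))) •
          Finsupp.single (dblClass γ hγ_cont p h0 h1 (u i) (v i) (huv i)) (1 : ℤ)) τ := by
  classical
  have hsmall : ∀ᶠ ε in nhdsWithin 0 (Set.Ioi 0), ∀ i, (u i, v i) ∈ truncSimplex ε :=
    Filter.eventually_all.2 fun i => eventually_mem_truncSimplex (huv_range i)
  obtain ⟨ε₀, hε₀, hsub⟩ := mem_nhdsGT_iff_exists_Ioo_subset.1 hsmall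
  refine ⟨ε₀, hε₀, fun ε hε hεε₀ hfin => ?_⟩
  have hhits : hfin.toFinset =
      ({i | dblClass γ hγ_cont p h0 h1 (u i) (v i) (huv i) = τ} : Finset (Fin k)).image
        fun i => (u i, v i) := by
    ext q
    simpa [truncSimplex, and_assoc] using Set.ext_iff.1
      (setOf_evFst_eq_evSnd_eq_image hγ_cont h0 h1 huv huv_all hε (hsub ⟨hε, hεε₀⟩) τ) q
  rw [hhits, Finset.sum_image huv_inj.injOn, Finsupp.sum_smul_single_one_apply]

/-- **Lemma `Lem:Intersec`**: for all sufficiently small `ε > 0`, the intersection number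
`I(ev_τ(C^ε), Δ)` of the image of the `2`-simplex
`C^ε = {(u,v) : ε ≤ u, u+ε ≤ v, v ≤ 1−ε}` under the lifted evaluation map `ev_τ` with the
diagonal `Δ ⊂ Σ̃ × Σ̃` equals the coefficient `⟨γ⟩^τ` of `τ` in `⟨γ⟩`.  Since all
intersections are transversal, the intersection number is the signed (by the orientation
sign of `(γ'(u), γ'(v))`) count of the parameters `(u,v) ∈ C^ε` with
`ev_τ(u,v) ∈ Δ`, i.e. with `ξ₁(u) = ξ₂(v)` in the universal cover. -/
theorem intersection_number_with_diagonal
    {M : Type*} [TopologicalSpace M] [ChartedSpace E2 M] [IsManifold (𝓡 2) (⊤ : ℕ∞) M]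
    -- an orientation of the surface, given by a continuous nonvanishing area form
    (ω : M → E2 →L[ℝ] E2 →L[ℝ] ℝ)
    (hω_cont : Continuous ω)
    (hω_alt : ∀ x v, ω x v v = 0)
    (hω_nondeg : ∀ (x : M) (v : E2), v ≠ 0 → ∃ w : E2, ω x v w ≠ 0)
    -- the curve: a generic immersion `γ : [0,1] → M` with base point `p = γ(0) = γ(1)`
    (γ : ℝ → M) (p : M)
    (hγ_smooth : ContMDiff 𝓘(ℝ, ℝ) (𝓡 2) (⊤ : ℕ∞) γ)
    (hγ_cont : Continuous γ)
    (h0 : γ 0 = p) (h1 : γ 1 = p)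
    (hclosed : tvec γ 0 = tvec γ 1)
    (himm : ∀ t, t ∈ Set.Icc (0:ℝ) 1 → tvec γ t ≠ 0)
    -- the double points of `γ`
    (k : ℕ) (u v : Fin k → ℝ)
    (huv : ∀ i, γ (u i) = γ (v i))
    (huv_range : ∀ i, 0 < u i ∧ u i < v i ∧ v i < 1)
    (huv_p : ∀ i, γ (u i) ≠ p)
    (huv_trans : ∀ i, ω (γ (u i)) (tvec γ (u i)) (tvec γ (v i)) ≠ 0)
    (huv_inj : Function.Injective fun i => (u i, v i))
    (huv_all : ∀ s t : ℝ, 0 ≤ s → s < t → t < 1 → γ s = γ t → ∃ i, u i = s ∧ v i = t)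
    (hno_triple : ∀ i j, i ≠ j → γ (u i) ≠ γ (u j))
    -- a homotopy class `τ ∈ π₁(Σ,p)`
    (τ : Path.Homotopic.Quotient p p) :
    ∃ ε₀ : ℝ, 0 < ε₀ ∧ ∀ ε : ℝ, 0 < ε → ε < ε₀ →
      -- the (finite) set of intersections of `ev_τ(C^ε)` with the diagonal `Δ`
      ∀ hfin : {q : ℝ × ℝ | ε ≤ q.1 ∧ q.1 + ε ≤ q.2 ∧ q.2 ≤ 1 - ε ∧
          evFst γ hγ_cont p h0 q.1 = evSnd γ hγ_cont p h1 τ q.2}.Finite,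
      -- I(ev_τ(C^ε), Δ) = ⟨γ⟩^τ
      (∑ q ∈ hfin.toFinset, osgn (ω (γ q.1) (tvec γ q.1) (tvec γ q.2)))
        =
      (∑ i : Fin k, osgn (ω (γ (u i)) (tvec γ (u i)) (tvec γ (v i))) •
          Finsupp.single (dblClass γ hγ_cont p h0 h1 (u i) (v i) (huv i)) (1 : ℤ)) τ :=
  intersection_number_with_diagonal_general ω γ p hγ_cont h0 h1 k u v huv huv_range huv_inj huv_all
    τ
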